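/- Let u₀ : ℝ → ℝ be measurable and locally integrable with u₀(x) ≤ u_M for all x, let c < 0, Δx > 0, Δt > 0, λ = Δt/Δx with |c|·λ ≤ 1, and fix x₊ ∈ ℝ with x₋ = x₊ − Δx. Define ū_j = (1/Δx)∫_{x₋}^{x₊} u₀(x) dx and f̌₊ = (c/Δt)∫₀^{Δt} u₀(x₊ − c t) dt. Then ū_j − λ·(f̌₊ − c·ū_j) ≤ u_M. (This is Theorem 3.3 of the paper instantiated to the linear flux f(u) = c u with c < 0, where the upwind Godunov flux at the left interface is f(ū_j) = c·ū_j.) -/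

import Mathlib

/-!
With `Δt = λ Δx`, the flux `f̌₊` is `c` times the time average `v` of `u₀(x₊ - c t)`, so the
update equals `(1 + λ c) ū_j + (-λ c) v`. Both `ū_j` and `v` are averages of `u₀`, hence at most
`u_M`, and for `c < 0` the CFL condition makes the two weights nonnegative with sum `1`.
-/

open MeasureTheory intervalIntegral

theorem MeasureTheory.LocallyIntegrable.intervalIntegrable {f : ℝ → ℝ} (hf : LocallyIntegrable f)
    (a b : ℝ) : IntervalIntegrable f volume a b :=
  (hf.integrableOn_isCompact isCompact_uIcc).intervalIntegrable

theorem MeasureTheory.LocallyIntegrable.intervalIntegrable_comp_sub_mul {f : ℝ → ℝ}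
    (hf : LocallyIntegrable f) (x c a b : ℝ) :
    IntervalIntegrable (fun t => f (x - c * t)) volume a b := by
  rcases eq_or_ne c 0 with rfl | hc
  · simp
  · simpa [hc] using
      ((hf.intervalIntegrable (x - c * a) (x - c * b)).comp_sub_left x).comp_mul_left (c := c)

theorem intervalIntegral.one_div_sub_mul_integral_le {f : ℝ → ℝ} {a b M : ℝ} (hab : a < b)
    (hf : IntervalIntegrable f volume a b) (hM : ∀ x ∈ Set.Icc a b, f x ≤ M) :
    1 / (b - a) * ∫ x in a..b, f x ≤ M := by
  have h := integral_mono_on hab.le hf intervalIntegrable_const hM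
  rw [integral_const, smul_eq_mul] at h
  rw [one_div_mul_eq_div, div_le_iff₀ (sub_pos.mpr hab)]
  linarith

theorem upwind_update_le {u v M lam c : ℝ} (hu : u ≤ M) (hv : v ≤ M)
    (hpos : lam * c ≤ 0) (hcfl : -1 ≤ lam * c) : u - lam * (c * v - c * u) ≤ M := by
  nlinarith [mul_nonneg (neg_nonneg.mpr hpos) (sub_nonneg.mpr hv),
    mul_nonneg (neg_le_iff_add_nonneg.mp hcfl) (sub_nonneg.mpr hu)]

theorem godunov_limited_update_max_neg_speed_general
    (u₀ : ℝ → ℝ) (hu : MeasureTheory.LocallyIntegrable u₀)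
    (u_M : ℝ) (hbound : ∀ x, u₀ x ≤ u_M)
    (c Δx Δt lam xp xm : ℝ) (hc : c < 0) (hΔx : 0 < Δx) (hΔt : 0 < Δt)
    (hlam : lam = Δt / Δx) (hcfl : |c| * lam ≤ 1) (hx : xm = xp - Δx)
    (ubar : ℝ)
    (hubar : ubar = (1 / Δx) * ∫ x in xm..xp, u₀ x)
    (fp : ℝ)
    (hfp : fp = (c / Δt) * ∫ t in (0:ℝ)..Δt, u₀ (xp - c * t)) :
    ubar - lam * (fp - c * ubar) ≤ u_M := by
  set v := 1 / Δt * ∫ t in (0:ℝ)..Δt, u₀ (xp - c * t)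
  have hfp_eq : fp = c * v := by rw [hfp]; ring
  have hubar_le : ubar ≤ u_M := by
    have h := one_div_sub_mul_integral_le (sub_lt_self xp hΔx) (hu.intervalIntegrable _ _)
      fun x _ => hbound x
    rwa [sub_sub_cancel, ← hx, ← hubar] at h
  have hv_le : v ≤ u_M := by
    have h := one_div_sub_mul_integral_le hΔt (hu.intervalIntegrable_comp_sub_mul xp c 0 Δt)
      fun t _ => hbound _
    rwa [sub_zero] at h
  have hlam_pos : 0 < lam := hlam ▸ div_pos hΔt hΔx
  rw [hfp_eq]
  refine upwind_update_le hubar_le hv_le (mul_nonpos_of_nonneg_of_nonpos hlam_pos.le hc.le) ?_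
  rw [abs_of_neg hc] at hcfl
  linarith

theorem godunov_limited_update_max_neg_speed
    (u₀ : ℝ → ℝ) (hmeas : Measurable u₀) (hu : MeasureTheory.LocallyIntegrable u₀)
    (u_M : ℝ) (hbound : ∀ x, u₀ x ≤ u_M)
    (c Δx Δt lam xp xm : ℝ) (hc : c < 0) (hΔx : 0 < Δx) (hΔt : 0 < Δt)
    (hlam : lam = Δt / Δx) (hcfl : |c| * lam ≤ 1) (hx : xm = xp - Δx)
    (ubar : ℝ)
    (hubar : ubar = (1 / Δx) * ∫ x in xm..xp, u₀ x)
    (fp : ℝ)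
    (hfp : fp = (c / Δt) * ∫ t in (0:ℝ)..Δt, u₀ (xp - c * t)) :
    ubar - lam * (fp - c * ubar) ≤ u_M :=
  godunov_limited_update_max_neg_speed_general u₀ hu u_M hbound c Δx Δt lam xp xm hc hΔx hΔt hlam
    hcfl hx ubar hubar fp hfp
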